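/- arXiv:2603.04780 — 2 statements merged into one kernel-verified Lean document; each statement's English description precedes it below -/
import Mathlib

section
/- Let G be a digraph on vertex set V. For any two vertex sets Z, Y ⊆ V (not necessarily disjoint), the path rank and the edge rank satisfy the duality: min(|Z|,|Y|) − ρ_G(Z,Y) = |V| − max(|Z|,|Y|) − r_G(V\Y, V\Z), where ρ_G(Z,Y) is the maximum number of vertex-disjoint directed paths from Y to Z and r_G(V\Y, V\Z) is the maximum matching from V\Z to V\Y via edges of G with self-matches allowed. -/
open Classical

/-- A directed path in a digraph `G`: a nonempty list of distinct vertices,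
consecutive ones joined by edges of `G`. -/
def IsDiPath {V : Type*} (G : V → V → Prop) (p : List V) : Prop :=
  p ≠ [] ∧ p.Chain' G ∧ p.Nodup

/-- A family of vertex-disjoint directed paths from `Y` to `Z` in `G`. -/
def PathFamily {V : Type*} (G : V → V → Prop) (Z Y : Finset V)
    (P : Finset (List V)) : Prop :=
  (∀ p ∈ P, IsDiPath G p ∧ (∃ a ∈ Y, p.head? = some a) ∧ (∃ b ∈ Z, p.getLast? = some b)) ∧
  (P : Set (List V)).Pairwise fun p q => ∀ v, v ∈ p → v ∉ q

/-- The path rank `ρ_G(Z, Y)`: the maximum number of vertex-disjoint directed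
paths from `Y` to `Z` in `G`. -/
noncomputable def pathRank {V : Type*} (G : V → V → Prop) (Z Y : Finset V) : ℕ :=
  sSup {k | ∃ P : Finset (List V), PathFamily G Z Y P ∧ P.card = k}

/-- The edge rank `r_G(Z, Y)`: the maximum size of a bipartite matching from `Y`
to `Z` via edges of `G`, with self-matches allowed for elements of `Y ∩ Z`. -/
noncomputable def edgeRank {V : Type*} (G : V → V → Prop) (Z Y : Finset V) : ℕ :=
  sSup {k | ∃ s : Finset (V × V), s.card = k ∧
    (∀ p ∈ s, p.1 ∈ Y ∧ p.2 ∈ Z ∧ (G p.1 p.2 ∨ p.1 = p.2)) ∧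
    (∀ p ∈ s, ∀ q ∈ s, p.1 = q.1 → p = q) ∧
    (∀ p ∈ s, ∀ q ∈ s, p.2 = q.2 → p = q)}

/-!
Since `min + max = |Z| + |Y|`, the claim is `ρ_G(Z,Y) + |V| = r_G(V∖Y, V∖Z) + |Y| + |Z|`.
Both inequalities are proved by induction through one operation: for an edge `a → b` with
`a ∈ Y`, `b ∉ Y`, delete all edges at `a` and replace `Y` by `Y - a + b`. This keeps `|Y|`, and
neither rank can grow: a path family from `Y - a + b` avoids `a`, so `a` can be put back in front
of the path starting at `b`; a matching can only use `a` through its loop, which is redirected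
along `a → b`.

A maximum matching is transformed by this operation (turning its pair `(a, b)` into the loop
`(a, a)`, where `a` is not matched into) until every matched vertex is also matched into; then it
misses `Y ∪ Z`, so it has at most `|V| - |Y ∪ Z|` pairs, while the trivial paths on `Y ∩ Z` give
`ρ ≥ |Y ∩ Z|`. Dually, cutting off first edges shrinks a maximum path family to trivial paths on
`Y ∩ Z`, and the loops on `V ∖ (Y ∪ Z)` give `r ≥ |V| - |Y ∪ Z|`.
-/

namespace Finset

variable {α β : Type*} [DecidableEq α] {s : Finset α} {x y : α}

lemma card_insert_erase_of_mem (hx : x ∈ s) (hy : y ∉ s.erase x) :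
    (insert y (s.erase x)).card = s.card := by
  rw [card_insert_of_notMem hy, card_erase_add_one hx]

lemma sum_insert_erase_add [AddCommMonoid β] (f : α → β) (hx : x ∈ s) (hy : y ∉ s.erase x) :
    ∑ z ∈ insert y (s.erase x), f z + f x = ∑ z ∈ s, f z + f y := by
  rw [sum_insert hy, add_assoc, sum_erase_add _ _ hx, add_comm]

end Finset

open Finset

section Paths

variable {V : Type*} {G G' : V → V → Prop} {Z Y Y' : Finset V} {P : Finset (List V)}

def isolate (G : V → V → Prop) (a : V) : V → V → Prop :=
  fun u v => G u v ∧ u ≠ a ∧ v ≠ a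

lemma List.IsChain.isolate {a : V} {p : List V} (h : p.IsChain G) (ha : a ∉ p) :
    p.IsChain (isolate G a) :=
  h.imp_of_mem_imp fun _ _ hu hv huv =>
    ⟨huv, ne_of_mem_of_not_mem hu ha, ne_of_mem_of_not_mem hv ha⟩

lemma notMem_of_isChain_isolate {a x : V} :
    ∀ {l : List V}, (x :: l).IsChain (isolate G a) → x ≠ a → a ∉ x :: l
  | [], _, hx => by simpa using hx.symm
  | y :: l, h, hx => by
    rw [List.isChain_cons_cons] at h
    have := notMem_of_isChain_isolate h.2 h.1.2.2
    simp_all [eq_comm]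

lemma IsDiPath.mono {p : List V} (h : IsDiPath G p) (hG : ∀ u v, G u v → G' u v) :
    IsDiPath G' p :=
  ⟨h.1, List.IsChain.imp hG h.2.1, h.2.2⟩

/-- A directed path from `Y` to `Z`, as in `PathFamily G Z Y`. -/
def IsLinkingPath (G : V → V → Prop) (Z Y : Finset V) (p : List V) : Prop :=
  IsDiPath G p ∧ (∃ a ∈ Y, p.head? = some a) ∧ ∃ b ∈ Z, p.getLast? = some b

lemma PathFamily.isLinkingPath (h : PathFamily G Z Y P) {p : List V} (hp : p ∈ P) :
    IsLinkingPath G Z Y p :=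
  h.1 p hp

lemma PathFamily.disjoint (h : PathFamily G Z Y P) {p q : List V} (hp : p ∈ P) (hq : q ∈ P)
    (hpq : p ≠ q) {v : V} (hvp : v ∈ p) : v ∉ q :=
  h.2 hp hq hpq v hvp

lemma PathFamily.card_le [Fintype V] (h : PathFamily G Z Y P) :
    P.card ≤ Fintype.card V + 1 := by
  have hinj : Set.InjOn List.head? (P : Set (List V)) := by
    intro p hp q hq hpq
    by_contra hne
    obtain ⟨a, -, ha⟩ := (h.isLinkingPath hp).2.1
    exact h.disjoint hp hq hne (List.mem_of_mem_head? ha)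
      (List.mem_of_mem_head? (hpq ▸ ha))
  calc P.card = (P.image List.head?).card := (card_image_of_injOn hinj).symm
    _ ≤ Fintype.card (Option V) := card_le_univ _
    _ = Fintype.card V + 1 := Fintype.card_option

lemma bddAbove_pathFamily_card [Fintype V] :
    BddAbove {k | ∃ P : Finset (List V), PathFamily G Z Y P ∧ P.card = k} :=
  ⟨Fintype.card V + 1, fun _ ⟨_, hP, hk⟩ => hk ▸ hP.card_le⟩

lemma le_pathRank [Fintype V] (h : PathFamily G Z Y P) : P.card ≤ pathRank G Z Y :=
  le_csSup bddAbove_pathFamily_card ⟨P, h, rfl⟩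

lemma exists_pathFamily_card_eq_pathRank [Fintype V] :
    ∃ P, PathFamily G Z Y P ∧ P.card = pathRank G Z Y := by
  refine Nat.sSup_mem ?_ bddAbove_pathFamily_card
  exact ⟨0, ∅, by simp [PathFamily], rfl⟩

variable [DecidableEq V]

lemma pathFamily_singletons : PathFamily G Z Y ((Y ∩ Z).image fun v => [v]) := by
  refine ⟨?_, ?_⟩
  · simp only [mem_image, mem_inter]
    rintro _ ⟨v, ⟨hvY, hvZ⟩, rfl⟩
    exact ⟨⟨List.cons_ne_nil _ _, List.isChain_singleton _, List.nodup_singleton _⟩,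
      ⟨v, hvY, rfl⟩, ⟨v, hvZ, rfl⟩⟩
  · simp only [coe_image, Set.Pairwise, Set.mem_image]
    rintro _ ⟨v, -, rfl⟩ _ ⟨w, -, rfl⟩ hne u hv hw
    rw [List.mem_singleton] at hv hw
    exact hne (by rw [← hv, ← hw])

lemma card_inter_le_pathRank [Fintype V] : (Y ∩ Z).card ≤ pathRank G Z Y := by
  have := le_pathRank (pathFamily_singletons (G := G) (Z := Z) (Y := Y))
  rwa [card_image_of_injective _ List.singleton_injective] at this

lemma PathFamily.replace (hP : PathFamily G Z Y P) {p q : List V}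
    (hq : IsLinkingPath G' Z Y' q) (hqP : ∀ r ∈ P, r ≠ p → ∀ v ∈ q, v ∉ r)
    (hPY' : ∀ r ∈ P, r ≠ p → IsDiPath G' r ∧ ∃ c ∈ Y', r.head? = some c) :
    PathFamily G' Z Y' (insert q (P.erase p)) ∧ q ∉ P.erase p := by
  refine ⟨⟨?_, ?_⟩, fun h => ?_⟩
  · simp only [mem_insert, mem_erase]
    rintro r (rfl | ⟨hrp, hr⟩)
    · exact hq
    · exact ⟨(hPY' r hr hrp).1, (hPY' r hr hrp).2, (hP.isLinkingPath hr).2.2⟩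
  · rw [coe_insert, coe_erase]
    refine (hP.2.mono Set.sdiff_subset).insert fun r ⟨hr, hrp⟩ _ => ?_
    have hrp : r ≠ p := hrp
    exact ⟨hqP r hr hrp, fun v hvr hvq => hqP r hr hrp v hvq hvr⟩
  · obtain ⟨v, hv⟩ := List.exists_mem_of_ne_nil q hq.1.1
    exact hqP q (mem_of_mem_erase h) (ne_of_mem_erase h) v hv hv

lemma PathFamily.card_le_card_inter (hP : PathFamily G Z Y P)
    (htriv : ∀ p ∈ P, ∀ a b l, p ≠ a :: b :: l) : P.card ≤ (Y ∩ Z).card := by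
  have hsub : P ⊆ (Y ∩ Z).image fun v => [v] := by
    intro p hp
    obtain ⟨⟨hpne, -⟩, ⟨c, hc, hpc⟩, ⟨d, hd, hpd⟩⟩ := hP.isLinkingPath hp
    match p, htriv p hp with
    | [], _ => exact absurd rfl hpne
    | [v], _ =>
      simp only [List.head?_cons, List.getLast?_singleton, Option.some.injEq] at hpc hpd
      exact mem_image.2 ⟨v, mem_inter.2 ⟨hpc ▸ hc, hpd ▸ hd⟩, rfl⟩
    | a :: b :: l, h => exact absurd rfl (h a b l)
  exact (card_le_card hsub).trans card_image_le

lemma PathFamily.exists_shorter (hP : PathFamily G Z Y P) {p q : List V} (hp : p ∈ P)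
    (hq : IsLinkingPath G Z Y q) (hqp : ∀ v ∈ q, v ∈ p) (hlen : q.length < p.length) :
    ∃ P', PathFamily G Z Y P' ∧ P'.card = P.card ∧
      ∑ r ∈ P', r.length < ∑ r ∈ P, r.length := by
  obtain ⟨hP', hq'⟩ := hP.replace (G' := G) (Y' := Y) hq
    (fun r hr hrp v hv => hP.disjoint hp hr hrp.symm (hqp v hv))
    (fun r hr _ => ⟨(hP.isLinkingPath hr).1, (hP.isLinkingPath hr).2.1⟩)
  refine ⟨_, hP', card_insert_erase_of_mem hp hq', ?_⟩
  have := sum_insert_erase_add List.length hp hq'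
  omega

lemma PathFamily.exists_isolate_head (hP : PathFamily G Z Y P) {a b : V} {l : List V}
    (hp : a :: b :: l ∈ P) :
    ∃ P', PathFamily (isolate G a) Z (insert b (Y.erase a)) P' ∧ P'.card = P.card ∧
      ∑ r ∈ P', r.length < ∑ r ∈ P, r.length := by
  obtain ⟨⟨-, hchain, hnodup⟩, -, c, hc, hpc⟩ := hP.isLinkingPath hp
  have hq : IsLinkingPath (isolate G a) Z (insert b (Y.erase a)) (b :: l) :=
    ⟨⟨List.cons_ne_nil _ _,
        (List.isChain_cons_cons.1 hchain).2.isolate (List.nodup_cons.1 hnodup).1, hnodup.of_cons⟩,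
      ⟨b, mem_insert_self _ _, rfl⟩, c, hc, by rwa [List.getLast?_cons_cons] at hpc⟩
  have hothers : ∀ r ∈ P, r ≠ a :: b :: l →
      IsDiPath (isolate G a) r ∧ ∃ c ∈ insert b (Y.erase a), r.head? = some c := by
    intro r hr hrp
    have har : a ∉ r := hP.disjoint hp hr hrp.symm List.mem_cons_self
    obtain ⟨⟨hrne, hrchain, hrnodup⟩, ⟨c, hcY, hrc⟩, -⟩ := hP.isLinkingPath hr
    refine ⟨⟨hrne, hrchain.isolate har, hrnodup⟩, c,
      mem_insert_of_mem (mem_erase.2 ⟨?_, hcY⟩), hrc⟩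
    rintro rfl
    exact har (List.mem_of_mem_head? hrc)
  obtain ⟨hP', hq'⟩ := hP.replace hq
    (fun r hr hrp v hv => hP.disjoint hp hr hrp.symm (List.mem_cons_of_mem _ hv)) hothers
  refine ⟨_, hP', card_insert_erase_of_mem hp hq', ?_⟩
  have := sum_insert_erase_add List.length hp hq'
  simp only [List.length_cons] at this
  omega

end Paths

section Matchings

variable {V : Type*} {G G' : V → V → Prop} {Z Z' Y : Finset V} {s : Finset (V × V)}

/-- A matching from `Y` to `Z`, as counted by `edgeRank G Z Y`. -/
structure IsMatching (G : V → V → Prop) (Z Y : Finset V) (s : Finset (V × V)) : Prop where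
  mem : ∀ p ∈ s, p.1 ∈ Y ∧ p.2 ∈ Z ∧ (G p.1 p.2 ∨ p.1 = p.2)
  injOn_fst : Set.InjOn Prod.fst (s : Set (V × V))
  injOn_snd : Set.InjOn Prod.snd (s : Set (V × V))

lemma edgeRank_eq_sSup :
    edgeRank G Z Y = sSup {k | ∃ s, IsMatching G Z Y s ∧ s.card = k} := by
  rw [edgeRank]
  congr 1
  ext k
  exact exists_congr fun s => ⟨fun ⟨hk, h₁, h₂, h₃⟩ => ⟨⟨h₁, h₂, h₃⟩, hk⟩,
    fun ⟨⟨h₁, h₂, h₃⟩, hk⟩ => ⟨hk, h₁, fun _ hp _ hq => @h₂ _ hp _ hq,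
      fun _ hp _ hq => @h₃ _ hp _ hq⟩⟩

lemma bddAbove_isMatching_card [Fintype V] :
    BddAbove {k | ∃ s, IsMatching G Z Y s ∧ s.card = k} :=
  ⟨Fintype.card (V × V), fun _ ⟨s, _, hk⟩ => hk ▸ card_le_univ s⟩

lemma le_edgeRank [Fintype V] (hs : IsMatching G Z Y s) : s.card ≤ edgeRank G Z Y :=
  edgeRank_eq_sSup ▸ le_csSup bddAbove_isMatching_card ⟨s, hs, rfl⟩

lemma exists_isMatching_card_eq_edgeRank [Fintype V] :
    ∃ s, IsMatching G Z Y s ∧ s.card = edgeRank G Z Y := by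
  rw [edgeRank_eq_sSup]
  refine Nat.sSup_mem ?_ bddAbove_isMatching_card
  exact ⟨0, ∅, ⟨by simp, by simp, by simp⟩, rfl⟩

lemma IsMatching.retarget (hs : IsMatching G Z Y s)
    (h : ∀ p ∈ s, p.2 ∈ Z' ∧ (G' p.1 p.2 ∨ p.1 = p.2)) : IsMatching G' Z' Y s :=
  ⟨fun p hp => ⟨(hs.mem p hp).1, h p hp⟩, hs.injOn_fst, hs.injOn_snd⟩

lemma IsMatching.mono (hs : IsMatching G Z Y s) (hG : ∀ u v, G u v → G' u v) (hZ : Z ⊆ Z') :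
    IsMatching G' Z' Y s :=
  hs.retarget fun p hp => ⟨hZ (hs.mem p hp).2.1, (hs.mem p hp).2.2.imp_left (hG _ _)⟩

variable [DecidableEq V]

lemma card_inter_le_edgeRank [Fintype V] : (Y ∩ Z).card ≤ edgeRank G Z Y := by
  have hloops : IsMatching G Z Y ((Y ∩ Z).image fun v => (v, v)) := by
    refine ⟨?_, ?_, ?_⟩
    · simp only [mem_image, mem_inter]
      rintro _ ⟨v, ⟨hvY, hvZ⟩, rfl⟩
      exact ⟨hvY, hvZ, Or.inr rfl⟩
    all_goals
      rw [coe_image]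
      rintro _ ⟨v, -, rfl⟩ _ ⟨w, -, rfl⟩ h
      simp_all
  have := le_edgeRank (G := G) hloops
  rwa [card_image_of_injective _ fun v w h => congrArg Prod.fst h] at this

lemma IsMatching.exchange {a b c : V} (hs : IsMatching G Z Y s) (hac : (a, c) ∈ s)
    (hab : G a b ∨ a = b) (hb : b ∉ s.image Prod.snd) :
    IsMatching G (insert b (Z.erase c)) Y (insert (a, b) (s.erase (a, c))) := by
  have hab' : (a, b) ∉ (s.erase (a, c) : Set (V × V)) := fun h =>
    hb (mem_image_of_mem _ (mem_of_mem_erase h))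
  refine ⟨?_, ?_, ?_⟩
  · simp only [mem_insert, mem_erase]
    rintro p (rfl | ⟨hpac, hp⟩)
    · exact ⟨(hs.mem _ hac).1, Or.inl rfl, hab⟩
    · obtain ⟨h₁, h₂, h₃⟩ := hs.mem p hp
      exact ⟨h₁, Or.inr ⟨fun h => hpac (hs.injOn_snd hp hac h), h₂⟩, h₃⟩
  · rw [coe_insert, Set.injOn_insert hab']
    refine ⟨hs.injOn_fst.mono (by simp), ?_⟩
    rintro ⟨p, hp, hpa⟩
    rw [mem_coe, mem_erase] at hp
    exact hp.1 (hs.injOn_fst hp.2 hac hpa)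
  · rw [coe_insert, Set.injOn_insert hab']
    refine ⟨hs.injOn_snd.mono (by simp), ?_⟩
    rintro ⟨p, hp, hpb⟩
    exact hb (mem_image.2 ⟨p, mem_of_mem_erase hp, hpb⟩)

lemma IsMatching.exchange_loop {a b : V} (hs : IsMatching G Z Y s) (hab : (a, b) ∈ s)
    (ha : a ∈ Z) (ha' : a ∉ s.image Prod.snd) :
    IsMatching G Z Y (insert (a, a) (s.erase (a, b))) :=
  (hs.exchange hab (Or.inr rfl) ha').mono (fun _ _ => id) (insert_subset ha (erase_subset _ _))

lemma IsMatching.isolate_exchange [Fintype V] {a b : V} (hs : IsMatching G Yᶜ Zᶜ s)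
    (hab : (a, b) ∈ s) (ha : a ∈ Y) :
    IsMatching (isolate G a) (insert b (Y.erase a))ᶜ Zᶜ (insert (a, a) (s.erase (a, b))) := by
  have hb : b ∉ Y := mem_compl.1 (hs.mem _ hab).2.1
  have ha' : a ∉ s.image Prod.snd := by
    simpa using fun c hc => mem_compl.1 (hs.mem _ hc).2.1 ha
  refine (hs.exchange hab (Or.inr rfl) ha').retarget ?_
  simp only [mem_insert, mem_erase]
  rintro p (rfl | ⟨hpab, hp⟩)
  · exact ⟨by simp [ne_of_mem_of_not_mem ha hb], Or.inr rfl⟩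
  · obtain ⟨-, hp₂, hG⟩ := hs.mem p hp
    have hp₁a : p.1 ≠ a := fun h => hpab (hs.injOn_fst hp hab h)
    have hp₂a : p.2 ≠ a := fun h => ha' (mem_image.2 ⟨p, hp, h⟩)
    have hp₂b : p.2 ≠ b := fun h => hpab (hs.injOn_snd hp hab h)
    refine ⟨by simp_all, hG.imp_left fun h => ⟨h, hp₁a, hp₂a⟩⟩

lemma card_filter_ne_exchange_lt {a b : V} (hab : (a, b) ∈ s) (hne : a ≠ b) :
    ((insert (a, a) (s.erase (a, b))).filter fun p => p.1 ≠ p.2).card <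
      (s.filter fun p => p.1 ≠ p.2).card := by
  rw [filter_insert, if_neg (by simp), filter_erase]
  exact card_erase_lt_of_mem (mem_filter.2 ⟨hab, hne⟩)

end Matchings

section MatchingToPaths

variable {V : Type*} [Fintype V] [DecidableEq V] {G : V → V → Prop} {Z Y : Finset V}
  {s : Finset (V × V)}

lemma pathRank_isolate_le {a b : V} (hab : G a b) (ha : a ∈ Y) (hne : a ≠ b) :
    pathRank (isolate G a) Z (insert b (Y.erase a)) ≤ pathRank G Z Y := by
  obtain ⟨P, hP, hcard⟩ := exists_pathFamily_card_eq_pathRank (G := isolate G a)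
    (Z := Z) (Y := insert b (Y.erase a))
  have haP : ∀ p ∈ P, a ∉ p := by
    intro p hp
    obtain ⟨⟨-, hchain, -⟩, ⟨c, hc, hpc⟩, -⟩ := hP.isLinkingPath hp
    obtain ⟨l, rfl⟩ : ∃ l, p = c :: l := ⟨p.tail, (List.cons_head?_tail hpc).symm⟩
    exact notMem_of_isChain_isolate hchain fun h => by simp_all
  have hpath : ∀ p ∈ P, IsDiPath G p := fun p hp =>
    (hP.isLinkingPath hp).1.mono fun _ _ h => h.1
  have hhead : ∀ p ∈ P, p.head? ≠ some b → ∃ c ∈ Y, p.head? = some c := by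
    intro p hp hpb
    obtain ⟨c, hc, hpc⟩ := (hP.isLinkingPath hp).2.1
    refine ⟨c, ?_, hpc⟩
    rw [mem_insert, mem_erase] at hc
    exact hc.resolve_left (by rintro rfl; exact hpb hpc) |>.2
  rw [← hcard]
  by_cases hb : ∃ p ∈ P, p.head? = some b
  · obtain ⟨p, hp, hpb⟩ := hb
    have hbp : b ∈ p := List.mem_of_mem_head? hpb
    obtain ⟨⟨-, hchain, hnodup⟩, -, c, hc, hpc⟩ := hP.isLinkingPath hp
    obtain ⟨hP', hq⟩ := hP.replace (G' := G) (Y' := Y) (q := a :: p)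
      ⟨⟨List.cons_ne_nil _ _, List.isChain_cons.2 ⟨by simpa [hpb], hchain.imp fun _ _ h => h.1⟩,
        List.nodup_cons.2 ⟨haP p hp, hnodup⟩⟩,
        ⟨a, ha, rfl⟩, c, hc, by simp [List.getLast?_cons, hpc]⟩
      (fun r hr hrp v hv => by
        rcases List.mem_cons.1 hv with rfl | hv
        exacts [haP r hr, hP.disjoint hp hr hrp.symm hv])
      (fun r hr hrp => ⟨hpath r hr, hhead r hr fun hrb =>
        hP.disjoint hp hr hrp.symm hbp (List.mem_of_mem_head? hrb)⟩)
    exact card_insert_erase_of_mem hp hq ▸ le_pathRank hP'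
  · push Not at hb
    exact le_pathRank ⟨fun p hp => ⟨hpath p hp, hhead p hp (hb p hp),
      (hP.isLinkingPath hp).2.2⟩, hP.2⟩

/-- When every matched vertex is also matched into, the matched vertices avoid `Y ∪ Z`. -/
lemma IsMatching.card_add_card_union_le (hs : IsMatching G Yᶜ Zᶜ s)
    (hsrc : ∀ a b, (a, b) ∈ s → a ≠ b → a ∈ s.image Prod.snd) :
    s.card + (Y ∪ Z).card ≤ Fintype.card V := by
  have hsub : s.image Prod.fst ⊆ (Y ∪ Z)ᶜ := by
    simp only [subset_iff, mem_image, mem_compl, mem_union, not_or]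
    rintro _ ⟨⟨a, b⟩, hab, rfl⟩
    have ha : a ∈ s.image Prod.snd := by
      by_cases hne : a = b
      · exact mem_image.2 ⟨(a, b), hab, hne.symm⟩
      · exact hsrc a b hab hne
    obtain ⟨⟨c, d⟩, hcd, rfl⟩ := mem_image.1 ha
    exact ⟨mem_compl.1 (hs.mem _ hcd).2.1, mem_compl.1 (hs.mem _ hab).1⟩
  calc s.card + (Y ∪ Z).card = (s.image Prod.fst).card + (Y ∪ Z).card := by
        rw [card_image_of_injOn hs.injOn_fst]
    _ ≤ (Y ∪ Z)ᶜ.card + (Y ∪ Z).card := Nat.add_le_add_right (card_le_card hsub) _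
    _ = Fintype.card V := card_compl_add_card _

/-- Induction on the number of non-loop pairs: a pair `(a, b)` with `a` not matched into is
turned into the loop `(a, a)`, after isolating `a` and moving it out of `Y` if `a ∈ Y`. -/
lemma IsMatching.card_add_card_add_card_le (hs : IsMatching G Yᶜ Zᶜ s) :
    s.card + Y.card + Z.card ≤ pathRank G Z Y + Fintype.card V := by
  induction hn : (s.filter fun p => p.1 ≠ p.2).card using Nat.strong_induction_on
    generalizing G Y s with
  | _ n ih =>
  by_cases hsrc : ∃ a b, (a, b) ∈ s ∧ a ≠ b ∧ a ∉ s.image Prod.snd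
  · obtain ⟨a, b, hab, hne, ha⟩ := hsrc
    have hlt := hn ▸ card_filter_ne_exchange_lt hab hne
    have hcard := card_insert_erase_of_mem hab fun h =>
      ha (mem_image.2 ⟨(a, a), mem_of_mem_erase h, rfl⟩)
    by_cases haY : a ∈ Y
    · have hb : b ∉ Y := mem_compl.1 (hs.mem _ hab).2.1
      have hY := card_insert_erase_of_mem haY (fun h => hb (mem_of_mem_erase h))
      have hρ := pathRank_isolate_le (Z := Z) (a := a) (b := b)
        ((hs.mem _ hab).2.2.resolve_right hne) haY hne
      have := ih _ hlt (hs.isolate_exchange hab haY) rfl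
      omega
    · have := ih _ hlt (hs.exchange_loop hab (mem_compl.2 haY) ha) rfl
      omega
  · push Not at hsrc
    have h₁ := hs.card_add_card_union_le hsrc
    have h₂ := card_inter_le_pathRank (G := G) (Z := Z) (Y := Y)
    have h₃ := card_union_add_card_inter Y Z
    omega

lemma edgeRank_add_card_add_card_le :
    edgeRank G Yᶜ Zᶜ + Y.card + Z.card ≤ pathRank G Z Y + Fintype.card V := by
  obtain ⟨s, hs, hcard⟩ := exists_isMatching_card_eq_edgeRank (G := G) (Z := Yᶜ) (Y := Zᶜ)
  exact hcard ▸ hs.card_add_card_add_card_le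

end MatchingToPaths

section PathsToMatching

variable {V : Type*} [Fintype V] [DecidableEq V] {G : V → V → Prop} {Z Y : Finset V}
  {P : Finset (List V)}

lemma edgeRank_isolate_le {a b : V} (hab : G a b) (hb : b ∉ Y) :
    edgeRank (isolate G a) (insert b (Y.erase a))ᶜ Zᶜ ≤ edgeRank G Yᶜ Zᶜ := by
  obtain ⟨s, hs, hcard⟩ := exists_isMatching_card_eq_edgeRank (G := isolate G a)
    (Z := (insert b (Y.erase a))ᶜ) (Y := Zᶜ)
  have hb' : b ∉ s.image Prod.snd := by
    simpa using fun c hc => mem_compl.1 (hs.mem _ hc).2.1 (mem_insert_self b _)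
  rw [← hcard]
  by_cases haa : (a, a) ∈ s
  · have hsub : insert b ((insert b (Y.erase a))ᶜ.erase a) ⊆ Yᶜ := by
      intro x
      simp only [mem_insert, mem_erase, mem_compl, not_or, not_and]
      rintro (rfl | ⟨hxa, -, hx⟩)
      exacts [hb, hx hxa]
    have hs' := ((hs.mono (fun _ _ h => h.1) subset_rfl).exchange haa (Or.inl hab) hb').mono
      (fun _ _ => id) hsub
    rw [← card_insert_erase_of_mem haa fun h => hb' (mem_image.2 ⟨(a, b), mem_of_mem_erase h, rfl⟩)]
    exact le_edgeRank hs'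
  · refine le_edgeRank (hs.retarget fun p hp => ⟨?_, (hs.mem p hp).2.2.imp_left fun h => h.1⟩)
    obtain ⟨-, hp₂, hG⟩ := hs.mem p hp
    have hp₂a : p.2 ≠ a := by
      rintro h
      rcases hG with hG | hG
      · exact hG.2.2 h
      · exact haa ((Prod.ext (hG.trans h) h : p = (a, a)) ▸ hp)
    simp only [mem_compl, mem_insert, mem_erase, not_or] at hp₂ ⊢
    exact fun hY => hp₂.2 ⟨hp₂a, hY⟩

/-- Induction on the total length of the paths: the first edge `a → b` of a path is cut off,
directly if `a ∈ Z` or `b ∈ Y`, and otherwise by isolating `a` and moving it in `Y` to `b`. -/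
lemma PathFamily.card_add_card_le (hP : PathFamily G Z Y P) :
    P.card + Fintype.card V ≤ edgeRank G Yᶜ Zᶜ + Y.card + Z.card := by
  induction hn : ∑ p ∈ P, p.length using Nat.strong_induction_on generalizing G Y P with
  | _ n ih =>
  by_cases hlong : ∃ p ∈ P, ∃ a b l, p = a :: b :: l
  · obtain ⟨_, hp, a, b, l, rfl⟩ := hlong
    obtain ⟨⟨-, hchain, hnodup⟩, ⟨_, haY, ⟨⟩⟩, c, hc, hpc⟩ := hP.isLinkingPath hp
    by_cases haZ : a ∈ Z
    · obtain ⟨P', hP', hcard, hlt⟩ := hP.exists_shorter hp (q := [a])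
        ⟨⟨List.cons_ne_nil _ _, List.isChain_singleton _, List.nodup_singleton _⟩,
          ⟨a, haY, rfl⟩, a, haZ, rfl⟩ (by simp) (by simp)
      exact hcard ▸ ih _ (hn ▸ hlt) hP' rfl
    by_cases hbY : b ∈ Y
    · obtain ⟨P', hP', hcard, hlt⟩ := hP.exists_shorter hp (q := b :: l)
        ⟨⟨List.cons_ne_nil _ _, (List.isChain_cons_cons.1 hchain).2, hnodup.of_cons⟩,
          ⟨b, hbY, rfl⟩, c, hc, by rwa [List.getLast?_cons_cons] at hpc⟩
        (fun _ => List.mem_cons_of_mem _) (by simp)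
      exact hcard ▸ ih _ (hn ▸ hlt) hP' rfl
    obtain ⟨P', hP', hcard, hlt⟩ := hP.exists_isolate_head hp
    have := ih _ (hn ▸ hlt) hP' rfl
    have hY := card_insert_erase_of_mem haY fun h => hbY (mem_of_mem_erase h)
    have hr := edgeRank_isolate_le (Z := Z) (List.isChain_cons_cons.1 hchain).1 hbY
    omega
  · push Not at hlong
    have h₁ := hP.card_le_card_inter hlong
    have h₂ := card_inter_le_edgeRank (G := G) (Z := Yᶜ) (Y := Zᶜ)
    rw [← compl_union, union_comm] at h₂
    have h₃ := card_compl_add_card (Y ∪ Z)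
    have h₄ := card_union_add_card_inter Y Z
    omega

end PathsToMatching

theorem pathRank_edgeRank_duality_general {V : Type*} [Fintype V] [DecidableEq V]
    (G : V → V → Prop) (Z Y : Finset V) :
    (min Z.card Y.card : ℤ) - pathRank G Z Y =
      (Fintype.card V : ℤ) - max Z.card Y.card - edgeRank G Yᶜ Zᶜ := by
  have h₁ := edgeRank_add_card_add_card_le (G := G) (Z := Z) (Y := Y)
  obtain ⟨P, hP, hcard⟩ := exists_pathFamily_card_eq_pathRank (G := G) (Z := Z) (Y := Y)
  have h₂ := hP.card_add_card_le
  omega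

/-- **Duality between path ranks and edge ranks.** For any vertex sets `Z, Y`:
`min(|Z|,|Y|) − ρ_G(Z,Y) = |V| − max(|Z|,|Y|) − r_G(V∖Y, V∖Z)`. -/
theorem pathRank_edgeRank_duality {V : Type*} [Fintype V] [DecidableEq V]
    (G : V → V → Prop) (hloop : ∀ v, ¬ G v v) (Z Y : Finset V) :
    (min Z.card Y.card : ℤ) - pathRank G Z Y =
      (Fintype.card V : ℤ) - max Z.card Y.card - edgeRank G Yᶜ Zᶜ :=
  pathRank_edgeRank_duality_general G Z Y
end

section
/- Let G be a digraph and C a collection of vertex-disjoint simple cycles in G. Define H by: (1) reversing every edge lying on a cycle of C; (2) for every edge u → v of G not on a cycle of C whose head v lies on a cycle of C with cycle-predecessor k (i.e., k → v on the cycle), replacing u → v by u → k; (3) keeping all other edges. Then the edge ranks are preserved up to the vertex permutation π induced by shifting each cycle: for all Z, Y ⊆ V, r_G(Z,Y) = r_H(π(Z), Y), where r denotes the maximum bipartite matching via edges with self-matches allowed. -/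
open Classical

/-- The digraph obtained from `G` by reversing a collection of vertex-disjoint
simple cycles (encoded by the predecessor permutation `π`): (1) an edge `u → v`
lying on a reversed cycle (`π v = u`) becomes `v → u`; (2) an edge `u → v` not
on a cycle whose head `v` lies on a cycle with predecessor `π v ≠ u` becomes
`u → π v`; (3) all other edges are kept. -/
def cycleReversed {V : Type*} (G : V → V → Prop) (π : Equiv.Perm V) :
    V → V → Prop :=
  fun a b => ∃ u v, G u v ∧
    ((π v = u ∧ a = v ∧ b = u) ∨
     (π v ≠ v ∧ π v ≠ u ∧ a = u ∧ b = π v) ∨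
     (π v = v ∧ a = u ∧ b = v))

/-- **Admissible cycle reversals preserve edge ranks.** Let `π` be a permutation
of the vertices whose non-fixed points form vertex-disjoint simple cycles of
`G`, mapping each vertex on a cycle to its cycle-predecessor (so `π v → v` is
an edge whenever `π v ≠ v`). Then for the cycle-reversed digraph `H`,
`r_G(Z, Y) = r_H(π(Z), Y)` for all vertex sets `Z, Y`. -/
theorem cycle_reversal_preserves_edgeRank {V : Type*} [Fintype V] [DecidableEq V]
    (G : V → V → Prop) (hloop : ∀ v, ¬ G v v) (π : Equiv.Perm V)
    (hπ : ∀ v, π v ≠ v → G (π v) v) (Z Y : Finset V) :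
    edgeRank G Z Y = edgeRank (cycleReversed G π) (Z.image π) Y := by
  have hinjf : Function.Injective (fun p : V × V => (p.1, π p.2)) := by
    intro p q h
    simp only [Prod.mk.injEq] at h
    exact Prod.ext h.1 (π.injective h.2)
  have hinjb : Function.Injective (fun p : V × V => (p.1, π.symm p.2)) := by
    intro p q h
    simp only [Prod.mk.injEq] at h
    exact Prod.ext h.1 (π.symm.injective h.2)
  unfold edgeRank
  congr 1
  ext k
  constructor
  · rintro ⟨s, hcard, hmem, h1, h2⟩
    refine ⟨s.image (fun p => (p.1, π p.2)), ?_, ?_, ?_, ?_⟩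
    · rw [Finset.card_image_of_injective _ hinjf, hcard]
    · intro p hp
      obtain ⟨q, hq, rfl⟩ := Finset.mem_image.1 hp
      obtain ⟨hY, hZ, hedge⟩ := hmem q hq
      refine ⟨hY, Finset.mem_image_of_mem _ hZ, ?_⟩
      rcases hedge with hG | heq
      · by_cases hfix : π q.2 = q.2
        · exact Or.inl ⟨q.1, q.2, hG, Or.inr (Or.inr ⟨hfix, rfl, hfix⟩)⟩
        · by_cases hon : π q.2 = q.1
          · exact Or.inr hon.symm
          · exact Or.inl ⟨q.1, q.2, hG, Or.inr (Or.inl ⟨hfix, hon, rfl, rfl⟩)⟩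
      · by_cases hfix : π q.2 = q.2
        · exact Or.inr (heq.trans hfix.symm)
        · refine Or.inl ⟨π q.2, q.2, hπ q.2 hfix, Or.inl ⟨rfl, heq, rfl⟩⟩
    · intro p hp q hq h
      obtain ⟨p', hp', rfl⟩ := Finset.mem_image.1 hp
      obtain ⟨q', hq', rfl⟩ := Finset.mem_image.1 hq
      exact congrArg (fun p : V × V => (p.1, π p.2)) (h1 p' hp' q' hq' h)
    · intro p hp q hq h
      obtain ⟨p', hp', rfl⟩ := Finset.mem_image.1 hp
      obtain ⟨q', hq', rfl⟩ := Finset.mem_image.1 hq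
      exact congrArg (fun p : V × V => (p.1, π p.2)) (h2 p' hp' q' hq' (π.injective h))
  · rintro ⟨s, hcard, hmem, h1, h2⟩
    refine ⟨s.image (fun p => (p.1, π.symm p.2)), ?_, ?_, ?_, ?_⟩
    · rw [Finset.card_image_of_injective _ hinjb, hcard]
    · intro p hp
      obtain ⟨q, hq, rfl⟩ := Finset.mem_image.1 hp
      obtain ⟨hY, hZ, hedge⟩ := hmem q hq
      obtain ⟨z, hz, hzq⟩ := Finset.mem_image.1 hZ
      have hZ' : π.symm q.2 ∈ Z := by
        rw [← hzq]; simpa using hz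
      refine ⟨hY, hZ', ?_⟩
      rcases hedge with ⟨u, v, hG, hcase⟩ | heq
      · rcases hcase with ⟨hpv, ha, hb⟩ | ⟨hnv, hnu, ha, hb⟩ | ⟨hpv, ha, hb⟩
        · -- q = (v, u), π v = u, so π.symm q.2 = v = q.1
          refine Or.inr ?_
          rw [ha, hb, ← hpv, Equiv.symm_apply_apply]
        · refine Or.inl ?_
          rw [ha, hb, Equiv.symm_apply_apply]
          exact hG
        · refine Or.inl ?_
          rw [ha, hb]
          have : π.symm v = v := by
            conv_lhs => rw [← hpv]
            exact Equiv.symm_apply_apply _ _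
          rw [this]
          exact hG
      · by_cases hfix : π.symm q.2 = q.2
        · exact Or.inr (heq.trans hfix.symm)
        · refine Or.inl ?_
          rw [heq]
          have hfix' : π (π.symm q.2) ≠ π.symm q.2 := by
            rw [Equiv.apply_symm_apply]
            exact fun h => hfix h.symm
          have := hπ _ hfix'
          rwa [Equiv.apply_symm_apply] at this
    · intro p hp q hq h
      obtain ⟨p', hp', rfl⟩ := Finset.mem_image.1 hp
      obtain ⟨q', hq', rfl⟩ := Finset.mem_image.1 hq
      exact congrArg (fun p : V × V => (p.1, π.symm p.2)) (h1 p' hp' q' hq' h)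
    · intro p hp q hq h
      obtain ⟨p', hp', rfl⟩ := Finset.mem_image.1 hp
      obtain ⟨q', hq', rfl⟩ := Finset.mem_image.1 hq
      exact congrArg (fun p : V × V => (p.1, π.symm p.2)) (h2 p' hp' q' hq' (π.symm.injective h))
end
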